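/- arXiv:1808.06864 — 2 statements merged into one kernel-verified Lean document; each statement's English description precedes it below -/
import Mathlib

section
/- For all δ, ε, η ∈ (0,1) there exists n₀ such that the following holds for all n ≥ n₀. Let H be a 3-partite 3-graph with vertex classes A, B and T (every edge of H has exactly one vertex in each class), where |A| = |B| = n and |T| ≥ εn, and suppose that for every A′ ⊆ A and B′ ⊆ B with |A′|, |B′| ≥ εn there are at least δ|A′||B′||T| edges of H with one vertex in each of A′, B′ and T. Then H contains a collection of at most ηn pairwise vertex-disjoint double pyramids, each having its two apexes in T and its cycle vertices alternating between A and B, which together cover at least (1−ε)n vertices of A and at least (1−ε)n vertices of B. -/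
/-!
Call `{a, b}` a common pair of apexes `t ≠ t'` in `T` if `{t, a, b}` and `{t', a, b}` are both
edges; a cycle of common pairs is the rim of a double pyramid with apexes `t, t'`, and in a
3-partite 3-graph it alternates between `A` and `B`. Pyramids are added greedily. As long as
`A₀ ⊆ A` and `B₀ ⊆ B` keep `εn` uncovered vertices each, density gives `≳ δ |A₀| |B₀| |T|` edges
on `A₀ × B₀ × T` avoiding the few apexes already used, so by Cauchy–Schwarz over pairs of apexes
some `t ≠ t'` have `≳ δ² |A₀| |B₀|` common pairs. For large `n` these exceed `2M (|A₀| + |B₀|)`,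
so they contain a subgraph of minimum degree `M`, and a longest path in it closes a cycle of length
`> M`. Each pyramid then covers more than `M / 2` vertices of `A` and as many of `B`, so at most
`2n / M` pyramids, and `4n / M` apexes, are ever used.
-/

/-- A *double pyramid* in a 3-graph with edge set `E`: two distinct apexes `x, y` and a cycle
`v₁ … v_m` (with `m ≥ 3`) of distinct vertices avoiding the apexes, such that all the triples
`{x, vᵢ, vᵢ₊₁}` and `{y, vᵢ, vᵢ₊₁}` (indices mod `m`) are edges. It is a triangulation of the
2-sphere. -/
structure DoublePyramid (V : Type*) [DecidableEq V] (E : Finset (Finset V)) where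
  m : ℕ
  hm : 3 ≤ m
  x : V
  y : V
  hxy : x ≠ y
  v : ZMod m → V
  hv : Function.Injective v
  hvx : ∀ i, v i ≠ x
  hvy : ∀ i, v i ≠ y
  hE : ∀ i, ({x, v i, v (i + 1)} : Finset V) ∈ E ∧ ({y, v i, v (i + 1)} : Finset V) ∈ E

def DoublePyramid.verts {V : Type*} [DecidableEq V] {E : Finset (Finset V)}
    (P : DoublePyramid V E) : Set V :=
  {P.x, P.y} ∪ Set.range P.v

open Finset Function

theorem exists_forall_le_of_bounded {α : Type*} {p : α → Prop} (f : α → ℕ) (b : ℕ)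
    (hp : ∃ a, p a) (hb : ∀ a, p a → f a ≤ b) : ∃ a, p a ∧ ∀ a', p a' → f a' ≤ f a := by
  have hbdd : BddAbove (f '' {a | p a}) := ⟨b, by rintro _ ⟨a, ha, rfl⟩; exact hb a ha⟩
  obtain ⟨a₀, ha₀⟩ := hp
  obtain ⟨a, ha, hfa⟩ := Nat.sSup_mem (s := f '' {a | p a}) ⟨f a₀, a₀, ha₀, rfl⟩ hbdd
  exact ⟨a, ha, fun a' ha' => hfa ▸ le_csSup hbdd ⟨a', ha', rfl⟩⟩

theorem Set.ncard_inter_iUnion_of_pairwise_disjoint {α ι : Type*} [Fintype ι] {s : Set α}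
    (hs : s.Finite) {t : ι → Set α} (ht : Pairwise (Disjoint on t)) :
    (s ∩ ⋃ i, t i).ncard = ∑ i, (s ∩ t i).ncard := by
  rw [Set.inter_iUnion, Set.ncard_iUnion_of_finite (fun i => hs.subset Set.inter_subset_left)
    (fun i j hij => (ht hij).mono Set.inter_subset_right Set.inter_subset_right),
    finsum_eq_sum_of_fintype]

theorem Fin.pairwise_disjoint_cons {α β : Type*} (f : β → Set α) {N : ℕ} {b : β} {g : Fin N → β}
    (hg : Pairwise (Disjoint on fun j => f (g j))) (hb : ∀ j, Disjoint (f b) (f (g j))) :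
    Pairwise (Disjoint on fun j => f ((Fin.cons b g : Fin (N + 1) → β) j)) := by
  intro i j hij
  cases i using Fin.cases <;> cases j using Fin.cases
  · exact absurd rfl hij
  · simpa [Function.onFun] using hb _
  · simpa [Function.onFun] using (hb _).symm
  · simpa [Function.onFun] using hg fun h => hij (congrArg Fin.succ h)

theorem Finset.card_filter_notMem_add_ncard_inter {α : Type*} (A : Finset α) (C : Set α)
    [DecidablePred (· ∈ C)] : #{a ∈ A | a ∉ C} + (↑A ∩ C).ncard = #A := by
  rw [show ↑A ∩ C = ↑{a ∈ A | a ∈ C} by ext; simp, Set.ncard_coe_finset, add_comm,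
    card_filter_add_card_filter_not]

namespace SimpleGraph

variable {V : Type*} [DecidableEq V] (G : SimpleGraph V)

theorem exists_path_forall_adj_mem {S : Finset V} (hS : S.Nonempty) :
    ∃ u l, (u :: l).Nodup ∧ (u :: l).IsChain G.Adj ∧ (∀ x ∈ u :: l, x ∈ S) ∧
      ∀ w ∈ S, G.Adj u w → w ∈ l := by
  let IsPath : List V → Prop := fun l => l.Nodup ∧ l.IsChain G.Adj ∧ ∀ x ∈ l, x ∈ S
  obtain ⟨s, hs⟩ := hS
  obtain ⟨⟨u, l⟩, ⟨hnd, hch, hlS⟩, hmax⟩ :=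
    exists_forall_le_of_bounded (p := fun q : V × List V => IsPath (q.1 :: q.2))
      (fun q => q.2.length) #S ⟨(s, []), by simp [IsPath, hs]⟩ fun q hq => by
        have := card_le_card (s := (q.1 :: q.2).toFinset)
          fun x hx => hq.2.2 x (List.mem_toFinset.1 hx)
        rw [List.toFinset_card_of_nodup hq.1, List.length_cons] at this
        omega
  refine ⟨u, l, hnd, hch, hlS, fun w hw huw => ?_⟩
  by_contra hwl
  have hwu : w ≠ u := (G.ne_of_adj huw).symm
  have := hmax (w, u :: l) ⟨List.nodup_cons.2 ⟨by simp [hwu, hwl], hnd⟩,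
    List.isChain_cons_cons.2 ⟨huw.symm, hch⟩, by simpa [hw] using hlS⟩
  simp at this

variable [DecidableRel G.Adj]

theorem card_interedges_singleton_left (v : V) (S : Finset V) :
    #(G.interedges {v} S) = #{w ∈ S | G.Adj v w} := by
  rw [interedges, Rel.interedges_eq_biUnion, singleton_biUnion, card_map]

theorem card_interedges_le_card_interedges_erase_add (v : V) (S : Finset V) :
    #(G.interedges S S) ≤ #(G.interedges (S.erase v) (S.erase v)) + 2 * #{w ∈ S | G.Adj v w} := by
  have hsub : G.interedges S S ⊆
      G.interedges (S.erase v) (S.erase v) ∪ G.interedges {v} S ∪ G.interedges S {v} := by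
    rintro ⟨a, b⟩ h
    simp only [mk_mem_interedges_iff, mem_union, mem_erase, mem_singleton] at h ⊢
    tauto
  have hsymm : #(G.interedges S {v}) = #(G.interedges {v} S) :=
    haveI := G.symm; Rel.card_interedges_comm _ _
  calc _ ≤ _ := card_le_card hsub
    _ ≤ _ := (card_union_le _ _).trans (add_le_add_left (card_union_le _ _) _)
    _ = _ := by rw [hsymm, card_interedges_singleton_left]; ring

theorem exists_subset_forall_le_card_adj (d : ℕ) (S : Finset V)
    (h : 2 * d * #S < #(G.interedges S S)) :
    ∃ S' ⊆ S, S'.Nonempty ∧ ∀ v ∈ S', d ≤ #{w ∈ S' | G.Adj v w} := by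
  induction S using Finset.strongInduction with
  | H S ih =>
  by_cases hlow : ∃ v ∈ S, #{w ∈ S | G.Adj v w} < d
  · obtain ⟨v, hv, hdeg⟩ := hlow
    have hI := G.card_interedges_le_card_interedges_erase_add v S
    have hS := card_erase_add_one hv
    obtain ⟨S', hS', hne, hmin⟩ := ih (S.erase v) (erase_ssubset hv) (by
      rw [← hS] at h; nlinarith)
    exact ⟨S', hS'.trans (erase_subset v S), hne, hmin⟩
  · push Not at hlow
    refine ⟨S, subset_rfl, nonempty_iff_ne_empty.2 ?_, hlow⟩
    rintro rfl
    simp at h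

theorem exists_cycle_of_le_card_adj {d : ℕ} (hd : 0 < d) {S : Finset V} (hS : S.Nonempty)
    (hdeg : ∀ v ∈ S, d ≤ #{w ∈ S | G.Adj v w}) :
    ∃ m, d < m ∧ ∃ c : ZMod m → V, Function.Injective c ∧ (∀ i, c i ∈ S) ∧
      ∀ i, G.Adj (c i) (c (i + 1)) := by
  obtain ⟨u, l, hnd, hch, hlS, hnbr⟩ := G.exists_path_forall_adj_mem hS
  have huS : u ∈ S := hlS u List.mem_cons_self
  -- the `d` neighbours of `u` sit at distinct positions of `l`, so one of them, `w`, is at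
  -- position `≥ d - 1`, and the path from `u` to `w` closes into a cycle of length `> d`
  obtain ⟨w, hw, huw, hjd⟩ : ∃ w ∈ S, G.Adj u w ∧ d - 1 ≤ l.idxOf w := by
    by_contra! hsmall
    have hle := card_le_card_of_injOn (fun w => l.idxOf w) (s := {w ∈ S | G.Adj u w})
      (t := range (d - 1))
      (fun w hw => mem_range.2 (by
        have hw := mem_filter.1 (mem_coe.1 hw)
        have := hsmall w hw.1 hw.2
        omega))
      (fun w hw w' _ h => (List.idxOf_inj (hnbr w (mem_filter.1 hw).1 (mem_filter.1 hw).2)).1 h)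
    have := hdeg u huS
    simp only [card_range] at hle
    omega
  have hj : l.idxOf w < l.length := List.idxOf_lt_length_iff.2 (hnbr w hw huw)
  set j := l.idxOf w
  have hlw : l[j] = w := List.getElem_idxOf hj
  refine ⟨j + 2, by omega,
    fun i => (u :: l)[i.val]'(by rw [List.length_cons]; have := ZMod.val_lt i; omega),
    fun i i' h => ZMod.val_injective _ ((List.Nodup.getElem_inj_iff hnd).1 h),
    fun i => hlS _ (List.getElem_mem _), fun i => ?_⟩
  have hi := ZMod.val_lt i
  have hone : (1 : ZMod (j + 2)).val = 1 := ZMod.val_one'' (by omega)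
  rcases Nat.lt_or_ge (i.val + 1) (j + 2) with hlt | hge
  · have hval : (i + 1).val = i.val + 1 := by rw [ZMod.val_add_of_lt (by omega), hone]
    simp only [hval]
    exact List.isChain_iff_getElem.1 hch _ _
  · have hij : i.val = j + 1 := by omega
    have hval : (i + 1).val = 0 := by rw [ZMod.val_add, hone, hij, Nat.mod_self]
    simp only [hval, hij, List.getElem_cons_succ, List.getElem_cons_zero, hlw]
    exact huw.symm

end SimpleGraph

theorem exists_ne_le_card_filter_and {ι α : Type*} [DecidableEq ι] (T : Finset ι) (X : Finset α)
    (p : α → ι → Prop) [∀ x t, Decidable (p x t)] {c : ℝ} (hc : 0 ≤ c)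
    (h : #X * (#T * #X + #T ^ 2 * c) < ((∑ t ∈ T, #{x ∈ X | p x t} : ℕ) : ℝ) ^ 2) :
    ∃ t ∈ T, ∃ t' ∈ T, t ≠ t' ∧ c ≤ #{x ∈ X | p x t ∧ p x t'} := by
  by_contra! hlt
  have hdeg : ∑ t ∈ T, #{x ∈ X | p x t} = ∑ x ∈ X, #{t ∈ T | p x t} :=
    (sum_card_bipartiteAbove_eq_sum_card_bipartiteBelow p).symm
  have hsq : ∑ x ∈ X, #{t ∈ T | p x t} ^ 2 = ∑ t ∈ T, ∑ t' ∈ T, #{x ∈ X | p x t ∧ p x t'} := by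
    simp only [sq, card_filter, sum_mul_sum, ite_zero_mul_ite_zero, mul_one]
    rw [sum_comm]
    exact sum_congr rfl fun t _ => sum_comm
  have hrow : ∀ t ∈ T, (∑ t' ∈ T, #{x ∈ X | p x t ∧ p x t'} : ℝ) ≤ #X + #T * c := by
    intro t ht
    rw [← add_sum_erase T _ ht]
    have hdiag : (#{x ∈ X | p x t ∧ p x t} : ℝ) ≤ #X := by exact_mod_cast card_filter_le _ _
    have hoff : ∑ t' ∈ T.erase t, (#{x ∈ X | p x t ∧ p x t'} : ℝ) ≤ #T * c :=
      (sum_le_sum fun t' ht' => (hlt t ht t' (mem_erase.1 ht').2 (ne_of_mem_erase ht').symm).le)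
        |>.trans (by
          rw [sum_const, nsmul_eq_mul]
          exact mul_le_mul_of_nonneg_right (by exact_mod_cast card_erase_le) hc)
    linarith
  have hcs := sq_sum_le_card_mul_sum_sq (s := X) (f := fun x => (#{t ∈ T | p x t} : ℝ))
  have : ((∑ t ∈ T, #{x ∈ X | p x t} : ℕ) : ℝ) ^ 2 ≤ #X * (#T * #X + #T ^ 2 * c) :=
    calc ((∑ t ∈ T, #{x ∈ X | p x t} : ℕ) : ℝ) ^ 2
        ≤ #X * ∑ x ∈ X, (#{t ∈ T | p x t} : ℝ) ^ 2 := by rw [hdeg]; push_cast; exact hcs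
      _ = #X * ∑ t ∈ T, ∑ t' ∈ T, (#{x ∈ X | p x t ∧ p x t'} : ℝ) := by
        exact_mod_cast congrArg (fun n : ℕ => (#X : ℝ) * n) hsq
      _ ≤ #X * ∑ t ∈ T, (#X + #T * c : ℝ) := by gcongr with t ht; exact hrow t ht
      _ = #X * (#T * #X + #T ^ 2 * c) := by rw [sum_const, nsmul_eq_mul]; ring
  linarith

section Hypergraph

variable {V : Type*} [DecidableEq V]

/-- The pairs forming an edge with both `x` and `y`: a cycle in this graph, avoiding `x` and `y`,
is the rim of a double pyramid with apexes `x, y`. -/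
def commonLink (E : Finset (Finset V)) (x y : V) : SimpleGraph V where
  Adj a b := a ≠ b ∧ ({x, a, b} : Finset V) ∈ E ∧ ({y, a, b} : Finset V) ∈ E
  symm := ⟨fun a b h => ⟨h.1.symm, by rw [pair_comm]; exact h.2.1, by rw [pair_comm]; exact h.2.2⟩⟩
  loopless := ⟨fun _ h => h.1 rfl⟩

instance (E : Finset (Finset V)) (x y : V) : DecidableRel (commonLink E x y).Adj :=
  fun a b => inferInstanceAs (Decidable (a ≠ b ∧ _ ∧ _))

namespace DoublePyramid

variable {E : Finset (Finset V)} {A B T : Finset V} {P : DoublePyramid V E}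

def IsAlternating (A B T : Finset V) (P : DoublePyramid V E) : Prop :=
  P.x ∈ T ∧ P.y ∈ T ∧ ∀ i, (P.v i ∈ A ∧ P.v (i + 1) ∈ B) ∨ (P.v i ∈ B ∧ P.v (i + 1) ∈ A)

theorem IsAlternating.symm (h : P.IsAlternating A B T) : P.IsAlternating B A T :=
  ⟨h.1, h.2.1, fun i => (h.2.2 i).symm⟩

theorem IsAlternating.v_mem (h : P.IsAlternating A B T) (i : ZMod P.m) : P.v i ∈ A ∪ B := by
  rcases h.2.2 i with hi | hi
  · exact mem_union_left _ hi.1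
  · exact mem_union_right _ hi.1

theorem IsAlternating.eq_apex_of_mem_verts (h : P.IsAlternating A B T) (hAT : Disjoint A T)
    (hBT : Disjoint B T) {z : V} (hz : z ∈ P.verts) (hzT : z ∈ T) : z = P.x ∨ z = P.y := by
  rcases hz with hz | ⟨i, rfl⟩
  · exact hz
  · rcases mem_union.1 (h.v_mem i) with hi | hi
    · exact absurd hzT (disjoint_left.1 hAT hi)
    · exact absurd hzT (disjoint_left.1 hBT hi)

theorem IsAlternating.two_mul_ncard_inter_verts (h : P.IsAlternating A B T) (hAB : Disjoint A B)
    (hAT : Disjoint A T) : 2 * (↑A ∩ P.verts).ncard = P.m := by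
  have : NeZero P.m := ⟨by have := P.hm; omega⟩
  have himage : ↑A ∩ P.verts = P.v '' {i | P.v i ∈ A} := by
    ext z
    simp only [verts, Set.mem_inter_iff, Set.mem_union, Set.mem_insert_iff,
      Set.mem_singleton_iff, Set.mem_range, Set.mem_image, Set.mem_ofPred_eq, mem_coe]
    constructor
    · rintro ⟨hzA, (rfl | rfl) | ⟨i, rfl⟩⟩
      · exact absurd h.1 (disjoint_left.1 hAT hzA)
      · exact absurd h.2.1 (disjoint_left.1 hAT hzA)
      · exact ⟨i, hzA, rfl⟩
    · rintro ⟨i, hi, rfl⟩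
      exact ⟨hi, Or.inr ⟨i, rfl⟩⟩
  -- `i ↦ i + 1` maps the rim positions in `A` onto those outside `A`
  have hshift : {i | P.v i ∈ A} = (· + 1) ⁻¹' {i | P.v i ∉ A} := by
    ext i
    rcases h.2.2 i with hi | hi
    · simp [hi.1, disjoint_right.1 hAB hi.2]
    · simp [hi.2, disjoint_right.1 hAB hi.1]
  rw [himage, Set.ncard_image_of_injective _ P.hv, two_mul]
  nth_rewrite 2 [hshift]
  rw [Set.ncard_preimage_of_injective_subset_range (add_left_injective 1)
    (fun i _ => ⟨i - 1, sub_add_cancel i 1⟩)]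
  exact (Set.ncard_add_ncard_compl _).trans (Nat.card_zmod _)

theorem disjoint_verts_of_forall_notMem {C : Set V} (hx : P.x ∉ C)
    (hy : P.y ∉ C) (hv : ∀ i, P.v i ∉ C) : Disjoint P.verts C := by
  rintro D hDP hDC z hz
  rcases hDP hz with (h | h) | ⟨i, h⟩
  · exact hx (h ▸ hDC hz)
  · exact hy (h ▸ hDC hz)
  · exact hv i (h ▸ hDC hz)

end DoublePyramid

section Packing

variable {E : Finset (Finset V)} {A B T : Finset V}

def IsPyramidPacking (A B T : Finset V) (M : ℕ) {N : ℕ} (P : Fin N → DoublePyramid V E) : Prop :=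
  (∀ j, (P j).IsAlternating A B T ∧ M < (P j).m) ∧ Pairwise (Disjoint on fun j => (P j).verts)

variable {M N : ℕ} {P : Fin N → DoublePyramid V E}

theorem IsPyramidPacking.symm (h : IsPyramidPacking A B T M P) : IsPyramidPacking B A T M P :=
  ⟨fun j => ⟨(h.1 j).1.symm, (h.1 j).2⟩, h.2⟩

theorem IsPyramidPacking.cons (h : IsPyramidPacking A B T M P) {P₀ : DoublePyramid V E}
    (h₀ : P₀.IsAlternating A B T) (hm : M < P₀.m) (hdisj : Disjoint P₀.verts (⋃ j, (P j).verts)) :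
    IsPyramidPacking A B T M (Fin.cons P₀ P : Fin (N + 1) → DoublePyramid V E) := by
  refine ⟨Fin.cases ⟨h₀, hm⟩ fun j => by simpa using h.1 j, ?_⟩
  exact Fin.pairwise_disjoint_cons DoublePyramid.verts h.2
    fun j => hdisj.mono_right (Set.subset_iUnion (fun j => (P j).verts) j)

theorem IsPyramidPacking.two_mul_ncard_inter_iUnion (h : IsPyramidPacking A B T M P)
    (hAB : Disjoint A B) (hAT : Disjoint A T) :
    2 * (↑A ∩ ⋃ j, (P j).verts).ncard = ∑ j, (P j).m := by
  rw [Set.ncard_inter_iUnion_of_pairwise_disjoint A.finite_toSet h.2, mul_sum]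
  exact sum_congr rfl fun j _ => (h.1 j).1.two_mul_ncard_inter_verts hAB hAT

theorem IsPyramidPacking.mul_le_sum (h : IsPyramidPacking A B T M P) :
    (M + 1) * N ≤ ∑ j, (P j).m := by
  simpa [mul_comm] using card_nsmul_le_sum univ (fun j => (P j).m) (M + 1) fun j _ => (h.1 j).2

theorem IsPyramidPacking.exists_apexes (h : IsPyramidPacking A B T M P) (hAT : Disjoint A T)
    (hBT : Disjoint B T) : ∃ U : Finset V, #U ≤ 2 * N ∧ ∀ z ∈ T, z ∈ ⋃ j, (P j).verts → z ∈ U := by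
  refine ⟨univ.image (fun j => (P j).x) ∪ univ.image (fun j => (P j).y), ?_, fun z hzT hzC => ?_⟩
  · exact (card_union_le _ _).trans (two_mul N ▸
      add_le_add (card_image_le.trans (card_fin N).le) (card_image_le.trans (card_fin N).le))
  · obtain ⟨j, hj⟩ := Set.mem_iUnion.1 hzC
    rcases (h.1 j).1.eq_apex_of_mem_verts hAT hBT hj hzT with rfl | rfl <;> simp

/-- `U` stands for the apex set of a packing, which has at most `2N ≤ 4 |A| / (M + 1)` elements. -/
theorem exists_isPyramidPacking (hAB : Disjoint A B) (hAT : Disjoint A T) (hBT : Disjoint B T)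
    (hcard : #A = #B) (M : ℕ) (s : ℝ)
    (hstep : ∀ U : Finset V, (M + 1) * #U ≤ 4 * #A → ∀ A₀ ⊆ A, ∀ B₀ ⊆ B, s ≤ #A₀ → s ≤ #B₀ →
      ∃ P : DoublePyramid V E, P.IsAlternating A B T ∧ M < P.m ∧ P.x ∉ U ∧ P.y ∉ U ∧
        ∀ i, P.v i ∈ A₀ ∪ B₀) :
    ∃ (N : ℕ) (P : Fin N → DoublePyramid V E), IsPyramidPacking A B T M P ∧ (M + 1) * N ≤ 2 * #A ∧
      (#A : ℝ) - s < (↑A ∩ ⋃ j, (P j).verts).ncard ∧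
      (#B : ℝ) - s < (↑B ∩ ⋃ j, (P j).verts).ncard := by
  classical
  -- a packing covering the most vertices of `A`; if it left `s` of them (hence `s` of `B`)
  -- uncovered, one more pyramid would fit
  obtain ⟨⟨N, P⟩, hP, hmax⟩ := exists_forall_le_of_bounded
    (p := fun Q : Σ N, Fin N → DoublePyramid V E => IsPyramidPacking A B T M Q.2)
    (fun Q => (↑A ∩ ⋃ j, (Q.2 j).verts).ncard) #A
    ⟨⟨0, Fin.elim0⟩, fun j => j.elim0, fun i => i.elim0⟩
    fun Q _ => (Set.ncard_le_ncard Set.inter_subset_left).trans (Set.ncard_coe_finset A).le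
  dsimp only at hP hmax
  have hA := hP.two_mul_ncard_inter_iUnion hAB hAT
  have hB := hP.symm.two_mul_ncard_inter_iUnion hAB.symm hBT
  have hN := hP.mul_le_sum
  set C := ⋃ j, (P j).verts
  have hA₀' := A.card_filter_notMem_add_ncard_inter C
  have hA₀ : (#{a ∈ A | a ∉ C} : ℝ) + (↑A ∩ C).ncard = #A := by exact_mod_cast hA₀'
  have hB₀ : (#{b ∈ B | b ∉ C} : ℝ) + (↑B ∩ C).ncard = #B := by
    exact_mod_cast B.card_filter_notMem_add_ncard_inter C
  have hAB₀ : (↑B ∩ C).ncard = (↑A ∩ C).ncard := by omega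
  refine ⟨N, P, hP, by omega, ?_⟩
  suffices (#A : ℝ) - s < (↑A ∩ C).ncard by
    refine ⟨this, ?_⟩
    rwa [← hcard, hAB₀]
  by_contra! hs
  obtain ⟨U, hU, hTC⟩ := hP.exists_apexes hAT hBT
  obtain ⟨P₀, h₀, hm₀, hx₀, hy₀, hv₀⟩ := hstep U (calc
      (M + 1) * #U ≤ (M + 1) * (2 * N) := Nat.mul_le_mul_left _ hU
      _ ≤ 4 * #A := by linarith) {a ∈ A | a ∉ C}
    (filter_subset _ _) {b ∈ B | b ∉ C} (filter_subset _ _)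
    (by linarith) (by rw [hAB₀, ← hcard] at hB₀; linarith)
  have hfresh : Disjoint P₀.verts C :=
    DoublePyramid.disjoint_verts_of_forall_notMem (fun h => hx₀ (hTC _ h₀.1 h))
      (fun h => hy₀ (hTC _ h₀.2.1 h)) fun i => by
        rcases mem_union.1 (hv₀ i) with h | h <;> exact (mem_filter.1 h).2
  have hnew := (hP.cons h₀ hm₀ hfresh).two_mul_ncard_inter_iUnion hAB hAT
  have hle := hmax ⟨N + 1, Fin.cons P₀ P⟩ (hP.cons h₀ hm₀ hfresh)
  simp only [Fin.sum_univ_succ, Fin.cons_zero, Fin.cons_succ] at hnew hle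
  omega

end Packing

structure IsTripartite (A B T : Finset V) (E : Finset (Finset V)) : Prop where
  disjoint_AB : Disjoint A B
  disjoint_AT : Disjoint A T
  disjoint_BT : Disjoint B T
  exists_eq_triple : ∀ e ∈ E, ∃ a ∈ A, ∃ b ∈ B, ∃ t ∈ T, e = {a, b, t}

namespace IsTripartite

variable {E : Finset (Finset V)} {A B T : Finset V}

theorem eq_of_mem_of_mem (hE : IsTripartite A B T E) {e : Finset V} (he : e ∈ E) {z z' : V}
    (hz : z ∈ e) (hz' : z' ∈ e) (h : z ∈ A ∧ z' ∈ A ∨ z ∈ B ∧ z' ∈ B) : z = z' := by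
  obtain ⟨a, ha, b, hb, t, ht, rfl⟩ := hE.exists_eq_triple e he
  have hAB := disjoint_left.1 hE.disjoint_AB
  have hAT := disjoint_left.1 hE.disjoint_AT
  have hBT := disjoint_left.1 hE.disjoint_BT
  simp only [mem_insert, mem_singleton] at hz hz'
  rcases hz with rfl | rfl | rfl <;> rcases hz' with rfl | rfl | rfl <;> tauto

theorem mem_and_mem_of_adj (hE : IsTripartite A B T E) {x y a b : V}
    (hab : (commonLink E x y).Adj a b) (ha : a ∈ A ∪ B) (hb : b ∈ A ∪ B) :
    (a ∈ A ∧ b ∈ B) ∨ (a ∈ B ∧ b ∈ A) := by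
  have hsame := fun h => hab.1 (hE.eq_of_mem_of_mem hab.2.1 (by simp) (by simp) h)
  rcases mem_union.1 ha with ha | ha <;> rcases mem_union.1 hb with hb | hb <;> tauto

theorem card_filter_le_sum_card (hE : IsTripartite A B T E) {A₀ B₀ : Finset V} (hA₀ : A₀ ⊆ A)
    (hB₀ : B₀ ⊆ B) :
    #{e ∈ E | (∃ a ∈ A₀, a ∈ e) ∧ ∃ b ∈ B₀, b ∈ e} ≤
      ∑ t ∈ T, #{q ∈ A₀ ×ˢ B₀ | ({t, q.1, q.2} : Finset V) ∈ E} := by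
  calc _ ≤ #(T.biUnion fun t => {q ∈ A₀ ×ˢ B₀ | ({t, q.1, q.2} : Finset V) ∈ E}.image
          fun q => ({t, q.1, q.2} : Finset V)) := card_le_card ?_
    _ ≤ _ := card_biUnion_le
    _ ≤ _ := sum_le_sum fun t _ => card_image_le
  intro e he
  obtain ⟨heE, ⟨a', ha', ha'e⟩, ⟨b', hb', hb'e⟩⟩ := mem_filter.1 he
  obtain ⟨a, ha, b, hb, t, ht, rfl⟩ := hE.exists_eq_triple _ heE
  obtain rfl := hE.eq_of_mem_of_mem heE ha'e (by simp) (Or.inl ⟨hA₀ ha', ha⟩)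
  obtain rfl := hE.eq_of_mem_of_mem heE hb'e (by simp) (Or.inr ⟨hB₀ hb', hb⟩)
  have hrot : ({a', b', t} : Finset V) = {t, a', b'} := by ext; simp; tauto
  rw [hrot] at heE ⊢
  exact mem_biUnion.2 ⟨t, ht, mem_image.2 ⟨(a', b'), by simp [ha', hb', heE], rfl⟩⟩

theorem exists_apex_pair (hE : IsTripartite A B T E) {δ s : ℝ} (hδ : 0 < δ) (hT : s ≤ #T)
    (hs : 16 < 3 * δ ^ 2 * s)
    (hdens : ∀ A' ⊆ A, ∀ B' ⊆ B, s ≤ #A' → s ≤ #B' →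
      δ * #A' * #B' * #T ≤ #{e ∈ E | (∃ a ∈ A', a ∈ e) ∧ ∃ b ∈ B', b ∈ e})
    {A₀ B₀ U : Finset V} (hA₀ : A₀ ⊆ A) (hB₀ : B₀ ⊆ B) (hsA₀ : s ≤ #A₀) (hsB₀ : s ≤ #B₀)
    (hU : 2 * #U ≤ δ * s) :
    ∃ t ∈ T, ∃ t' ∈ T, t ≠ t' ∧ t ∉ U ∧ t' ∉ U ∧ δ ^ 2 * #A₀ * #B₀ / 16 ≤
      #{q ∈ A₀ ×ˢ B₀ | ({t, q.1, q.2} : Finset V) ∈ E ∧ ({t', q.1, q.2} : Finset V) ∈ E} := by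
  set deg : V → ℕ := fun t => #{q ∈ A₀ ×ˢ B₀ | ({t, q.1, q.2} : Finset V) ∈ E}
  set p : ℝ := #A₀ * #B₀ with hp_def
  set T' := {t ∈ T | t ∉ U}
  have hs0 : 0 < s := by by_contra! h; nlinarith [sq_nonneg δ]
  have hp : 0 < p := mul_pos (hs0.trans_le hsA₀) (hs0.trans_le hsB₀)
  have hT0 : 0 < (#T : ℝ) := hs0.trans_le hT
  have hdeg : ∀ t, (deg t : ℝ) ≤ p := fun t => by
    rw [hp_def, ← Nat.cast_mul, ← card_product]; exact_mod_cast card_filter_le _ _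
  have htotal : δ * p * #T ≤ ∑ t ∈ T, (deg t : ℝ) :=
    calc δ * p * #T = δ * #A₀ * #B₀ * #T := by rw [hp_def]; ring
      _ ≤ _ := hdens A₀ hA₀ B₀ hB₀ hsA₀ hsB₀
      _ ≤ _ := by exact_mod_cast hE.card_filter_le_sum_card hA₀ hB₀
  have hused : ∑ t ∈ T with t ∈ U, (deg t : ℝ) ≤ #U * p :=
    (sum_le_sum fun t _ => hdeg t).trans (by
      rw [sum_const, nsmul_eq_mul]
      exact mul_le_mul_of_nonneg_right
        (by exact_mod_cast card_le_card fun t ht => (mem_filter.1 ht).2) hp.le)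
  have hfree : δ * p * #T / 2 ≤ ∑ t ∈ T', (deg t : ℝ) := by
    have := sum_filter_add_sum_filter_not T (· ∈ U) fun t => (deg t : ℝ)
    have : (#U : ℝ) * p ≤ δ * #T / 2 * p := mul_le_mul_of_nonneg_right (by nlinarith) hp.le
    linarith
  have hT' : (#T' : ℝ) ≤ #T := by exact_mod_cast card_filter_le _ _
  obtain ⟨t, ht, t', ht', htt', hc⟩ := exists_ne_le_card_filter_and T' (A₀ ×ˢ B₀)
    (fun q t => ({t, q.1, q.2} : Finset V) ∈ E) (c := δ ^ 2 * p / 16) (by positivity) (by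
      rw [card_product, Nat.cast_mul, ← hp_def]
      push_cast
      calc p * (#T' * p + #T' ^ 2 * (δ ^ 2 * p / 16))
          = p ^ 2 * (#T' + δ ^ 2 * #T' ^ 2 / 16) := by ring
        _ ≤ p ^ 2 * (#T + δ ^ 2 * #T ^ 2 / 16) := by gcongr
        _ < p ^ 2 * (δ ^ 2 * #T ^ 2 / 4) := by
          have : δ ^ 2 * s ≤ δ ^ 2 * #T := mul_le_mul_of_nonneg_left hT (sq_nonneg δ)
          gcongr
          nlinarith [mul_pos hT0 (show 0 < 3 * δ ^ 2 * #T - 16 by linarith)]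
        _ = (δ * p * #T / 2) ^ 2 := by ring
        _ ≤ (∑ t ∈ T', (deg t : ℝ)) ^ 2 := by gcongr)
  exact ⟨t, (mem_filter.1 ht).1, t', (mem_filter.1 ht').1, htt', (mem_filter.1 ht).2,
    (mem_filter.1 ht').2, by rw [mul_assoc]; exact hc⟩

theorem exists_doublePyramid (hE : IsTripartite A B T E) {M : ℕ} (hM : 2 ≤ M) {A₀ B₀ : Finset V}
    (hA₀ : A₀ ⊆ A) (hB₀ : B₀ ⊆ B) {t t' : V} (ht : t ∈ T) (ht' : t' ∈ T) (htt' : t ≠ t')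
    (hcodeg : 2 * M * (#A₀ + #B₀) <
      #{q ∈ A₀ ×ˢ B₀ | ({t, q.1, q.2} : Finset V) ∈ E ∧ ({t', q.1, q.2} : Finset V) ∈ E}) :
    ∃ P : DoublePyramid V E, P.IsAlternating A B T ∧ M < P.m ∧ P.x = t ∧ P.y = t' ∧
      ∀ i, P.v i ∈ A₀ ∪ B₀ := by
  set L := commonLink E t t'
  have hdisj : Disjoint A₀ B₀ := hE.disjoint_AB.mono hA₀ hB₀
  have hcount : 2 * M * #(A₀ ∪ B₀) < #(L.interedges (A₀ ∪ B₀) (A₀ ∪ B₀)) := by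
    rw [card_union_of_disjoint hdisj]
    refine hcodeg.trans_le (card_le_card ?_)
    rintro ⟨a, b⟩ hab
    obtain ⟨hab, hat, hbt⟩ := mem_filter.1 hab
    obtain ⟨ha, hb⟩ := mem_product.1 hab
    exact (L.mk_mem_interedges_iff).2 ⟨mem_union_left _ ha, mem_union_right _ hb,
      fun h => disjoint_left.1 hdisj ha (h ▸ hb), hat, hbt⟩
  obtain ⟨S, hS, hSne, hSdeg⟩ := L.exists_subset_forall_le_card_adj M _ hcount
  obtain ⟨m, hm, c, hc, hcS, hadj⟩ := L.exists_cycle_of_le_card_adj (by omega) hSne hSdeg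
  have hcAB : ∀ i, c i ∈ A ∪ B := fun i => union_subset_union hA₀ hB₀ (hS (hcS i))
  have hcT : ∀ i, c i ∉ T := fun i => by
    rcases mem_union.1 (hcAB i) with h | h
    · exact disjoint_left.1 hE.disjoint_AT h
    · exact disjoint_left.1 hE.disjoint_BT h
  exact ⟨⟨m, by omega, t, t', htt', c, hc, fun i h => hcT i (h ▸ ht), fun i h => hcT i (h ▸ ht'),
      fun i => (hadj i).2⟩,
    ⟨ht, ht', fun i => hE.mem_and_mem_of_adj (hadj i) (hcAB i) (hcAB (i + 1))⟩,
    hm, rfl, rfl, fun i => hS (hcS i)⟩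

theorem exists_doublePyramid_avoiding (hE : IsTripartite A B T E) {δ s : ℝ} (hδ : 0 < δ)
    (hT : s ≤ #T) (hdens : ∀ A' ⊆ A, ∀ B' ⊆ B, s ≤ #A' → s ≤ #B' →
      δ * #A' * #B' * #T ≤ #{e ∈ E | (∃ a ∈ A', a ∈ e) ∧ ∃ b ∈ B', b ∈ e})
    {M : ℕ} (hM : 2 ≤ M) (hMs : 64 * M < δ ^ 2 * s) {U : Finset V} (hU : 2 * #U ≤ δ * s)
    {A₀ B₀ : Finset V} (hA₀ : A₀ ⊆ A) (hB₀ : B₀ ⊆ B) (hsA₀ : s ≤ #A₀) (hsB₀ : s ≤ #B₀) :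
    ∃ P : DoublePyramid V E, P.IsAlternating A B T ∧ M < P.m ∧ P.x ∉ U ∧ P.y ∉ U ∧
      ∀ i, P.v i ∈ A₀ ∪ B₀ := by
  have hM' : (2 : ℝ) ≤ M := by exact_mod_cast hM
  obtain ⟨t, ht, t', ht', htt', htU, ht'U, hcodeg⟩ :=
    hE.exists_apex_pair hδ hT (by linarith) hdens hA₀ hB₀ hsA₀ hsB₀ hU
  -- `2 |A₀| |B₀| ≥ s (|A₀| + |B₀|)`, and `δ² s > 64 M`
  have hsum : (2 * M * (#A₀ + #B₀) : ℝ) < δ ^ 2 * #A₀ * #B₀ / 16 := by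
    have hs0 : 0 < s := by nlinarith [sq_nonneg δ]
    nlinarith [mul_nonneg (sub_nonneg.2 hsA₀) (sub_nonneg.2 hsB₀), sq_nonneg δ]
  obtain ⟨P, hP, hm, rfl, rfl, hv⟩ :=
    hE.exists_doublePyramid hM hA₀ hB₀ ht ht' htt' (by exact_mod_cast hsum.trans_le hcodeg)
  exact ⟨P, hP, hm, htU, ht'U, hv⟩

end IsTripartite

end Hypergraph

theorem statement7_general (δ ε η : ℝ) (hδ0 : 0 < δ) (hε0 : 0 < ε)
    (hη0 : 0 < η) :
    ∃ n₀ : ℕ, ∀ n : ℕ, n₀ ≤ n →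
      ∀ (V : Type) [Fintype V] [DecidableEq V] (A B T : Finset V) (E : Finset (Finset V)),
        Disjoint A B → Disjoint A T → Disjoint B T →
        (∀ e ∈ E, ∃ a ∈ A, ∃ b ∈ B, ∃ t ∈ T, e = {a, b, t}) →
        A.card = n → B.card = n → ε * n ≤ (T.card : ℝ) →
        (∀ A' ⊆ A, ∀ B' ⊆ B, ε * n ≤ (A'.card : ℝ) → ε * n ≤ (B'.card : ℝ) →
          δ * A'.card * B'.card * T.card ≤
            ((E.filter fun e => (∃ a ∈ A', a ∈ e) ∧ ∃ b ∈ B', b ∈ e).card : ℝ)) →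
        ∃ (N : ℕ) (P : Fin N → DoublePyramid V E),
          (N : ℝ) ≤ η * n ∧
          (∀ j, (P j).x ∈ T ∧ (P j).y ∈ T) ∧
          (∀ j i, ((P j).v i ∈ A ∧ (P j).v (i + 1) ∈ B) ∨
                  ((P j).v i ∈ B ∧ (P j).v (i + 1) ∈ A)) ∧
          (∀ j₁ j₂, j₁ ≠ j₂ → Disjoint (P j₁).verts (P j₂).verts) ∧
          (1 - ε) * n ≤ (({a : V | a ∈ A ∧ ∃ j, a ∈ (P j).verts}).ncard : ℝ) ∧
          (1 - ε) * n ≤ (({b : V | b ∈ B ∧ ∃ j, b ∈ (P j).verts}).ncard : ℝ) := by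
  obtain ⟨M, hM⟩ := exists_nat_ge (8 / (δ * ε) + 2 / η + 2)
  have h8 : 0 < 8 / (δ * ε) := by positivity
  have h2 : 0 < 2 / η := by positivity
  have hMδε : 8 ≤ M * (δ * ε) := by rw [← div_le_iff₀ (by positivity)]; linarith
  have hMη : 2 ≤ M * η := by rw [← div_le_iff₀ hη0]; linarith
  have hM2 : 2 ≤ M := by exact_mod_cast (by linarith : (2 : ℝ) ≤ M)
  obtain ⟨n₀, hn₀⟩ := exists_nat_gt (64 * M / (δ ^ 2 * ε))
  refine ⟨n₀, fun n hn V _ _ A B T E hAB hAT hBT hpart hA hB hT hdens => ?_⟩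
  have hMn : 64 * M < δ ^ 2 * (ε * n) := by
    have := (div_lt_iff₀ (by positivity)).1 (hn₀.trans_le (Nat.cast_le.2 hn))
    linarith
  obtain ⟨N, P, hP, hN, hcovA, hcovB⟩ :=
    exists_isPyramidPacking hAB hAT hBT (hA.trans hB.symm) M (ε * n)
    fun U hU A₀ hA₀ B₀ hB₀ hsA₀ hsB₀ =>
      (IsTripartite.mk hAB hAT hBT hpart).exists_doublePyramid_avoiding hδ0 hT hdens hM2
        hMn (by
          have : ((M + 1) * #U : ℝ) ≤ 4 * n := by rw [← hA]; exact_mod_cast hU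
          nlinarith) hA₀ hB₀ hsA₀ hsB₀
  have hset : ∀ X : Finset V, {a | a ∈ X ∧ ∃ j, a ∈ (P j).verts} = ↑X ∩ ⋃ j, (P j).verts :=
    fun X => by ext; simp
  refine ⟨N, P, ?_, fun j => ⟨(hP.1 j).1.1, (hP.1 j).1.2.1⟩, fun j => (hP.1 j).1.2.2, hP.2, ?_, ?_⟩
  · have : ((M + 1) * N : ℝ) ≤ 2 * n := by rw [← hA]; exact_mod_cast hN
    nlinarith
  · rw [hset]; rw [hA] at hcovA; linarith
  · rw [hset]; rw [hB] at hcovB; linarith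

/-- for all `δ, ε, η ∈ (0,1)` there is `n₀` such that for all `n ≥ n₀` the
following holds. If `H` is a 3-partite 3-graph with classes `A`, `B`, `T`, `|A| = |B| = n`,
`|T| ≥ εn`, and for all `A' ⊆ A`, `B' ⊆ B` with `|A'|, |B'| ≥ εn` there are at least
`δ|A'||B'||T|` edges with one vertex in each of `A'`, `B'`, `T`, then `H` contains at most
`ηn` pairwise vertex-disjoint double pyramids, each with both apexes in `T` and cycle
alternating between `A` and `B`, together covering at least `(1-ε)n` vertices of each of
`A` and `B`. -/
theorem statement7 (δ ε η : ℝ) (hδ0 : 0 < δ) (hδ1 : δ < 1) (hε0 : 0 < ε) (hε1 : ε < 1)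
    (hη0 : 0 < η) (hη1 : η < 1) :
    ∃ n₀ : ℕ, ∀ n : ℕ, n₀ ≤ n →
      ∀ (V : Type) [Fintype V] [DecidableEq V] (A B T : Finset V) (E : Finset (Finset V)),
        Disjoint A B → Disjoint A T → Disjoint B T →
        (∀ e ∈ E, ∃ a ∈ A, ∃ b ∈ B, ∃ t ∈ T, e = {a, b, t}) →
        A.card = n → B.card = n → ε * n ≤ (T.card : ℝ) →
        (∀ A' ⊆ A, ∀ B' ⊆ B, ε * n ≤ (A'.card : ℝ) → ε * n ≤ (B'.card : ℝ) →
          δ * A'.card * B'.card * T.card ≤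
            ((E.filter fun e => (∃ a ∈ A', a ∈ e) ∧ ∃ b ∈ B', b ∈ e).card : ℝ)) →
        ∃ (N : ℕ) (P : Fin N → DoublePyramid V E),
          (N : ℝ) ≤ η * n ∧
          (∀ j, (P j).x ∈ T ∧ (P j).y ∈ T) ∧
          (∀ j i, ((P j).v i ∈ A ∧ (P j).v (i + 1) ∈ B) ∨
                  ((P j).v i ∈ B ∧ (P j).v (i + 1) ∈ A)) ∧
          (∀ j₁ j₂, j₁ ≠ j₂ → Disjoint (P j₁).verts (P j₂).verts) ∧
          (1 - ε) * n ≤ (({a : V | a ∈ A ∧ ∃ j, a ∈ (P j).verts}).ncard : ℝ) ∧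
          (1 - ε) * n ≤ (({b : V | b ∈ B ∧ ∃ j, b ∈ (P j).verts}).ncard : ℝ) :=
  statement7_general δ ε η hδ0 hε0 hη0
end

section
/- For every ε ∈ (0,1) there exist δ > 0 and n₀ such that the following holds for all n ≥ n₀. Let H be a 3-graph on n vertices. Then for all but at most εn⁴ touching pairs of edges of H the following holds: writing the touching pair as e = {u,v,x} and f = {u,v,y} (so e ∩ f = {u,v} and the symmetric difference of e and f is {x,y}), there are at least δn² ordered pairs (w,z) of vertices such that x, y, u, v, w, z are six distinct vertices and all eight triples {u,v,x}, {u,v,y}, {v,w,x}, {v,w,y}, {w,z,x}, {w,z,y}, {z,u,x}, {z,u,y} are edges of H. -/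
/-!
Fix `x ≠ y` and call `{u, v}` a poor edge of the common link of `x` and `y` if both `uvx` and
`uvy` are edges but `(u, v)` and `(v, u)` each extend to fewer than `K = δ n²` double pyramids.
In the graph of poor edges every edge lies on fewer than `K` genuine 4-cycles, hence on fewer
than `K + 2n` closed 4-walks. On the other hand two applications of Cauchy–Schwarz show that a
graph with `m` ordered edges has at least `m⁴ / n⁴` closed 4-walks. So `m³ ≤ n⁴ (K + 2n)`, which
for `δ = ε³ / 4` and `n ≥ 8 / ε³` gives `m ≤ ε n²`. Every poor touching pair comes from a poor
edge for some `(x, y)`, and there are at most `n²` such choices.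
-/

open Finset
open scoped Classical

theorem pow_three_le_of_pow_four_le_mul {m X : ℝ} (hm : 0 ≤ m) (hX : 0 ≤ X)
    (h : m ^ 4 ≤ m * X) : m ^ 3 ≤ X := by
  rcases hm.eq_or_lt with rfl | hm
  · rwa [zero_pow three_ne_zero]
  · exact le_of_mul_le_mul_left (by linarith) hm

section FourCycles

variable {V : Type*} [Fintype V]

theorem sum_pow_four_le_card_pow_four_mul_sum_cycle (t : V → V → ℝ)
    (ht : ∀ u v, t u v = t v u) :
    (∑ u, ∑ v, t u v) ^ 4 ≤
      (Fintype.card V : ℝ) ^ 4 * ∑ u, ∑ v, ∑ w, ∑ z, t u v * t v w * t w z * t z u := by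
  set n := (Fintype.card V : ℝ)
  set c : V → V → ℝ := fun u w => ∑ v, t u v * t v w
  have hdeg : (∑ u, ∑ v, t u v) ^ 2 ≤ n * ∑ u, ∑ w, c u w := by
    calc (∑ u, ∑ v, t u v) ^ 2 = (∑ v, ∑ u, t u v) ^ 2 := by rw [Finset.sum_comm]
      _ ≤ n * ∑ v, (∑ u, t u v) ^ 2 := sq_sum_le_card_mul_sum_sq
      _ = n * ∑ u, ∑ w, c u w := by
        simp only [sq, Finset.sum_mul_sum, c]
        rw [Finset.sum_comm]
        exact congrArg (n * ·) <| sum_congr rfl fun u _ => by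
          rw [Finset.sum_comm]
          exact sum_congr rfl fun w _ => sum_congr rfl fun v _ => by rw [ht w v]
  have hcodeg : (∑ u, ∑ w, c u w) ^ 2 ≤ n ^ 2 * ∑ u, ∑ w, c u w ^ 2 := by
    simpa [Fintype.sum_prod_type, Fintype.card_prod, n, ← sq] using
      sq_sum_le_card_mul_sum_sq (s := (univ : Finset (V × V))) (f := fun p => c p.1 p.2)
  have hcycle : ∑ u, ∑ w, c u w ^ 2 = ∑ u, ∑ v, ∑ w, ∑ z, t u v * t v w * t w z * t z u := by
    refine sum_congr rfl fun u _ => ?_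
    have hc : ∀ w, c u w = ∑ z, t w z * t z u := fun w =>
      sum_congr rfl fun z _ => by rw [ht u z, ht z w, mul_comm]
    calc ∑ w, c u w ^ 2 = ∑ w, (∑ v, t u v * t v w) * ∑ z, t w z * t z u :=
          sum_congr rfl fun w _ => by rw [sq, ← hc]
      _ = ∑ v, ∑ w, ∑ z, t u v * t v w * t w z * t z u := by
          simp only [sum_mul_sum, mul_assoc]
          exact Finset.sum_comm
  calc (∑ u, ∑ v, t u v) ^ 4 = ((∑ u, ∑ v, t u v) ^ 2) ^ 2 := by ring
    _ ≤ (n * ∑ u, ∑ w, c u w) ^ 2 := pow_le_pow_left₀ (sq_nonneg _) hdeg 2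
    _ = n ^ 2 * (∑ u, ∑ w, c u w) ^ 2 := by ring
    _ ≤ n ^ 2 * (n ^ 2 * ∑ u, ∑ w, c u w ^ 2) := by gcongr
    _ = _ := by rw [hcycle]; ring

variable (r : V → V → Prop) [DecidableRel r]

theorem card_closedWalks_le_card_cycles_add (u v : V) :
    #{wz : V × V | r v wz.1 ∧ r wz.1 wz.2 ∧ r wz.2 u} ≤
      #{wz : V × V | r v wz.1 ∧ r wz.1 wz.2 ∧ r wz.2 u ∧ u ≠ wz.1 ∧ v ≠ wz.2} +
        2 * Fintype.card V := by
  calc _ ≤ #(({wz : V × V | r v wz.1 ∧ r wz.1 wz.2 ∧ r wz.2 u ∧ u ≠ wz.1 ∧ v ≠ wz.2} :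
          Finset _) ∪ ({u} ×ˢ univ ∪ univ ×ˢ {v})) := by
        refine card_le_card fun p => ?_
        simp only [mem_filter, mem_univ, true_and, mem_union, mem_product, mem_singleton]
        tauto
    _ ≤ _ + (#({u} ×ˢ (univ : Finset V)) + #((univ : Finset V) ×ˢ {v})) :=
        (card_union_le _ _).trans (Nat.add_le_add_left (card_union_le _ _) _)
    _ = _ := by simp only [card_product, card_singleton, card_univ]; ring

theorem card_rel_pow_three_le (hr : ∀ u v, r u v → r v u) {K : ℝ} (hK0 : 0 ≤ K)
    (hK : ∀ u v, r u v →
      (#{wz : V × V | r v wz.1 ∧ r wz.1 wz.2 ∧ r wz.2 u ∧ u ≠ wz.1 ∧ v ≠ wz.2} : ℝ) ≤ K) :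
    (#{uv : V × V | r uv.1 uv.2} : ℝ) ^ 3 ≤
      (Fintype.card V : ℝ) ^ 4 * (K + 2 * Fintype.card V) := by
  set n := (Fintype.card V : ℝ)
  set m := (#{uv : V × V | r uv.1 uv.2} : ℝ)
  set t : V → V → ℝ := fun u v => if r u v then 1 else 0
  have hm : m = ∑ u, ∑ v, t u v := by
    rw [← Fintype.sum_prod_type']
    simp only [t, sum_boole, m]
  have hwalks : ∀ u v, ∑ w, ∑ z, t v w * t w z * t z u =
      #{wz : V × V | r v wz.1 ∧ r wz.1 wz.2 ∧ r wz.2 u} := by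
    intro u v
    simp only [t, ite_zero_mul_ite_zero, mul_one, and_assoc]
    rw [← Fintype.sum_prod_type', sum_boole]
  have hW : ∑ u, ∑ v, ∑ w, ∑ z, t u v * t v w * t w z * t z u ≤ m * (K + 2 * n) :=
    calc _ = ∑ u, ∑ v, t u v * ∑ w, ∑ z, t v w * t w z * t z u := by
          simp only [mul_sum, mul_assoc]
      _ ≤ ∑ u, ∑ v, t u v * (K + 2 * n) := by
          refine sum_le_sum fun u _ => sum_le_sum fun v _ => ?_
          by_cases h : r u v
          · have hcard : (#{wz : V × V | r v wz.1 ∧ r wz.1 wz.2 ∧ r wz.2 u} : ℝ) ≤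
                #{wz : V × V | r v wz.1 ∧ r wz.1 wz.2 ∧ r wz.2 u ∧ u ≠ wz.1 ∧ v ≠ wz.2} +
                  2 * n := by
              simp only [n]; exact_mod_cast card_closedWalks_le_card_cycles_add r u v
            simp only [t, if_pos h, one_mul, hwalks]
            linarith [hK u v h]
          · simp [t, h]
      _ = m * (K + 2 * n) := by simp only [hm, sum_mul]
  have ht : ∀ u v, t u v = t v u := fun u v => by simp only [t, propext ⟨hr u v, hr v u⟩]
  refine pow_three_le_of_pow_four_le_mul (by positivity) (by positivity) ?_
  calc m ^ 4 = (∑ u, ∑ v, t u v) ^ 4 := by rw [hm]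
    _ ≤ n ^ 4 * ∑ u, ∑ v, ∑ w, ∑ z, t u v * t v w * t w z * t z u :=
        sum_pow_four_le_card_pow_four_mul_sum_cycle t ht
    _ ≤ n ^ 4 * (m * (K + 2 * n)) := by gcongr
    _ = m * (n ^ 4 * (K + 2 * n)) := by ring

end FourCycles

section DoublePyramid

variable {V : Type*} [DecidableEq V]

theorem ne_of_card_insert_insert_eq_three {a b c : V} (h : #({a, b, c} : Finset V) = 3) :
    a ≠ b ∧ a ≠ c ∧ b ≠ c := by
  grind [card_le_two, card_insert_eq_ite]

theorem exists_eq_triples_of_card_inter_eq_two {e f : Finset V} (he : #e = 3) (hf : #f = 3)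
    (hef : #(e ∩ f) = 2) : ∃ u v x y, x ≠ y ∧ e = {u, v, x} ∧ f = {u, v, y} := by
  obtain ⟨u, v, -, huv⟩ := card_eq_two.1 hef
  have hfe : #(f ∩ e) = 2 := by rwa [inter_comm]
  obtain ⟨x, hx⟩ := card_eq_one.1 (by have := card_sdiff_add_card_inter e f; omega :
    #(e \ f) = 1)
  obtain ⟨y, hy⟩ := card_eq_one.1 (by have := card_sdiff_add_card_inter f e; omega :
    #(f \ e) = 1)
  refine ⟨u, v, x, y, ?_, ?_, ?_⟩
  · rintro rfl
    exact (mem_sdiff.1 (hx ▸ mem_singleton_self x)).2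
      (mem_sdiff.1 (hy ▸ mem_singleton_self x)).1
  · rw [← sdiff_union_inter e f, hx, huv]
    ext; simp only [mem_union, mem_insert, mem_singleton]; tauto
  · rw [← sdiff_union_inter f e, hy, inter_comm, huv]
    ext; simp only [mem_union, mem_insert, mem_singleton]; tauto

variable (E : Finset (Finset V))

def IsCommonLinkEdge (x y u v : V) : Prop :=
  {u, v, x} ∈ E ∧ {u, v, y} ∈ E

theorem isCommonLinkEdge_comm {x y u v : V} :
    IsCommonLinkEdge E x y u v ↔ IsCommonLinkEdge E x y v u := by
  simp only [IsCommonLinkEdge, insert_comm u v]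

variable [Fintype V]

def pyramidCompletions (x y u v : V) : Finset (V × V) :=
  (Finset.univ ×ˢ Finset.univ : Finset (V × V)).filter fun wz =>
    ([x, y, u, v, wz.1, wz.2] : List V).Pairwise (· ≠ ·) ∧
    ({u, v, x} : Finset V) ∈ E ∧ ({u, v, y} : Finset V) ∈ E ∧
    ({v, wz.1, x} : Finset V) ∈ E ∧ ({v, wz.1, y} : Finset V) ∈ E ∧
    ({wz.1, wz.2, x} : Finset V) ∈ E ∧ ({wz.1, wz.2, y} : Finset V) ∈ E ∧
    ({wz.2, u, x} : Finset V) ∈ E ∧ ({wz.2, u, y} : Finset V) ∈ E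

theorem mem_pyramidCompletions {x y u v w z : V} :
    (w, z) ∈ pyramidCompletions E x y u v ↔
      [x, y, u, v, w, z].Pairwise (· ≠ ·) ∧ IsCommonLinkEdge E x y u v ∧
        IsCommonLinkEdge E x y v w ∧ IsCommonLinkEdge E x y w z ∧ IsCommonLinkEdge E x y z u := by
  simp [pyramidCompletions, IsCommonLinkEdge, and_assoc]

variable {E}

theorem mk_mem_pyramidCompletions (hE : ∀ e ∈ E, #e = 3) {x y u v w z : V} (hxy : x ≠ y)
    (huw : u ≠ w) (hvz : v ≠ z) (huv : IsCommonLinkEdge E x y u v)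
    (hvw : IsCommonLinkEdge E x y v w) (hwz : IsCommonLinkEdge E x y w z)
    (hzu : IsCommonLinkEdge E x y z u) : (w, z) ∈ pyramidCompletions E x y u v := by
  refine (mem_pyramidCompletions E).2 ⟨?_, huv, hvw, hwz, hzu⟩
  have hne {a b c : V} (h : {a, b, c} ∈ E) := ne_of_card_insert_insert_eq_three (hE _ h)
  have := hne huv.1; have := hne huv.2; have := hne hvw.1; have := hne hvw.2
  have := hne hwz.1; have := hne hwz.2; have := hne hzu.1
  simp only [List.pairwise_cons, List.mem_cons, List.not_mem_nil]
  grind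

variable (E)

def IsPoorLinkEdge (K : ℝ) (x y u v : V) : Prop :=
  IsCommonLinkEdge E x y u v ∧ (#(pyramidCompletions E x y u v) : ℝ) < K ∧
    (#(pyramidCompletions E x y v u) : ℝ) < K

theorem IsPoorLinkEdge.symm {K : ℝ} {x y u v : V} (h : IsPoorLinkEdge E K x y u v) :
    IsPoorLinkEdge E K x y v u :=
  ⟨(isCommonLinkEdge_comm E).1 h.1, h.2.2, h.2.1⟩

variable {E}

theorem card_poorLinkEdges_pow_three_le (hE : ∀ e ∈ E, #e = 3) {x y : V} (hxy : x ≠ y)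
    {K : ℝ} (hK : 0 ≤ K) :
    (#{uv : V × V | IsPoorLinkEdge E K x y uv.1 uv.2} : ℝ) ^ 3 ≤
      (Fintype.card V : ℝ) ^ 4 * (K + 2 * Fintype.card V) := by
  refine card_rel_pow_three_le (IsPoorLinkEdge E K x y) (fun u v h => h.symm) hK
    fun u v huv => ?_
  refine (Nat.cast_le.2 (card_le_card fun wz hwz => ?_)).trans huv.2.1.le
  simp only [mem_filter, mem_univ, true_and] at hwz
  obtain ⟨hvw, hwz, hzu, huw, hvz⟩ := hwz
  exact mk_mem_pyramidCompletions hE hxy huw hvz huv.1 hvw.1 hwz.1 hzu.1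

theorem card_poorLinkEdges_le (hE : ∀ e ∈ E, #e = 3) {x y : V} (hxy : x ≠ y) {ε : ℝ}
    (hε : 0 < ε) (hn : 8 / ε ^ 3 ≤ Fintype.card V) :
    (#{uv : V × V | IsPoorLinkEdge E (ε ^ 3 / 4 * Fintype.card V ^ 2) x y uv.1 uv.2} : ℝ) ≤
      ε * Fintype.card V ^ 2 := by
  set n := (Fintype.card V : ℝ)
  have hεn : 8 ≤ ε ^ 3 * n := by rwa [div_le_iff₀' (by positivity)] at hn
  have hn0 : 0 < n := lt_of_lt_of_le (by positivity) hn
  refine le_of_pow_le_pow_left₀ three_ne_zero (by positivity) ?_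
  calc _ ≤ n ^ 4 * (ε ^ 3 / 4 * n ^ 2 + 2 * n) :=
        card_poorLinkEdges_pow_three_le hE hxy (by positivity)
    _ ≤ (ε * n ^ 2) ^ 3 := by
      have := mul_le_mul_of_nonneg_left hεn (pow_pos hn0 5).le
      linarith [pow_pos hn0 5]

variable (E) in
noncomputable def poorTouchingPairs (K : ℝ) : Finset (Finset V × Finset V) :=
  (E ×ˢ E).filter fun p =>
    (p.1 ∩ p.2).card = 2 ∧
    ¬ ∃ u v x y : V, p.1 = {u, v, x} ∧ p.2 = {u, v, y} ∧
      K ≤ ((pyramidCompletions E x y u v).card : ℝ)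

theorem poorTouchingPairs_subset_biUnion (hE : ∀ e ∈ E, #e = 3) (K : ℝ) :
    poorTouchingPairs E K ⊆ ({xy : V × V | xy.1 ≠ xy.2} : Finset _).biUnion fun xy =>
      ({uv : V × V | IsPoorLinkEdge E K xy.1 xy.2 uv.1 uv.2} : Finset _).image fun uv =>
        (({uv.1, uv.2, xy.1} : Finset V), ({uv.1, uv.2, xy.2} : Finset V)) := by
  rintro ⟨e, f⟩ hp
  simp only [poorTouchingPairs, mem_filter, mem_product, not_exists, not_and, not_le] at hp
  obtain ⟨⟨he, hf⟩, hef, hpoor⟩ := hp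
  obtain ⟨u, v, x, y, hxy, rfl, rfl⟩ :=
    exists_eq_triples_of_card_inter_eq_two (hE _ he) (hE _ hf) hef
  simp only [mem_biUnion, mem_image, mem_filter, mem_univ, true_and]
  refine ⟨(x, y), hxy, (u, v), ⟨⟨he, hf⟩, hpoor u v x y rfl rfl, ?_⟩, rfl⟩
  exact hpoor v u x y (insert_comm u v _) (insert_comm u v _)

theorem card_poorTouchingPairs_le (hE : ∀ e ∈ E, #e = 3) {K B : ℝ} (hB0 : 0 ≤ B)
    (hB : ∀ x y : V, x ≠ y → (#{uv : V × V | IsPoorLinkEdge E K x y uv.1 uv.2} : ℝ) ≤ B) :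
    (#(poorTouchingPairs E K) : ℝ) ≤ Fintype.card V ^ 2 * B := by
  calc (#(poorTouchingPairs E K) : ℝ)
      ≤ ∑ xy ∈ ({xy : V × V | xy.1 ≠ xy.2} : Finset _),
          (#{uv : V × V | IsPoorLinkEdge E K xy.1 xy.2 uv.1 uv.2} : ℝ) := by
        exact_mod_cast (card_le_card (poorTouchingPairs_subset_biUnion hE K)).trans <|
          card_biUnion_le.trans <| sum_le_sum fun _ _ => card_image_le
    _ ≤ ∑ xy ∈ ({xy : V × V | xy.1 ≠ xy.2} : Finset _), B :=
        sum_le_sum fun xy hxy => hB _ _ (mem_filter.1 hxy).2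
    _ ≤ Fintype.card V ^ 2 * B := by
        rw [sum_const, nsmul_eq_mul]
        gcongr
        exact_mod_cast (card_filter_le _ _).trans_eq (by simp [sq])

end DoublePyramid

theorem statement9_general (ε : ℝ) (hε0 : 0 < ε) :
    ∃ δ : ℝ, 0 < δ ∧ ∃ n₀ : ℕ, ∀ n : ℕ, n₀ ≤ n →
      ∀ (V : Type) [Fintype V] [DecidableEq V], Fintype.card V = n →
        ∀ E : Finset (Finset V), (∀ e ∈ E, e.card = 3) →
          (((E ×ˢ E).filter fun p =>
              (p.1 ∩ p.2).card = 2 ∧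
              ¬ ∃ u v x y : V, p.1 = {u, v, x} ∧ p.2 = {u, v, y} ∧
                δ * n ^ 2 ≤
                  (((Finset.univ ×ˢ Finset.univ : Finset (V × V)).filter fun wz =>
                    ([x, y, u, v, wz.1, wz.2] : List V).Pairwise (· ≠ ·) ∧
                    ({u, v, x} : Finset V) ∈ E ∧ ({u, v, y} : Finset V) ∈ E ∧
                    ({v, wz.1, x} : Finset V) ∈ E ∧ ({v, wz.1, y} : Finset V) ∈ E ∧
                    ({wz.1, wz.2, x} : Finset V) ∈ E ∧ ({wz.1, wz.2, y} : Finset V) ∈ E ∧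
                    ({wz.2, u, x} : Finset V) ∈ E ∧
                    ({wz.2, u, y} : Finset V) ∈ E).card : ℝ)).card : ℝ)
            ≤ ε * n ^ 4 := by
  refine ⟨ε ^ 3 / 4, by positivity, ⌈8 / ε ^ 3⌉₊, fun n hn V _ _ hV E hE => ?_⟩
  subst hV
  calc (#(poorTouchingPairs E (ε ^ 3 / 4 * Fintype.card V ^ 2)) : ℝ)
      ≤ Fintype.card V ^ 2 * (ε * Fintype.card V ^ 2) :=
        card_poorTouchingPairs_le hE (by positivity) fun _ _ hxy =>
          card_poorLinkEdges_le hE hxy hε0 (Nat.ceil_le.1 hn)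
    _ = ε * Fintype.card V ^ 4 := by ring

/-- for every `ε ∈ (0,1)` there are `δ > 0` and `n₀` such that for every
3-graph `H` on `n ≥ n₀` vertices, all but at most `ε n⁴` touching pairs `(e, f)` of edges,
written `e = {u,v,x}` and `f = {u,v,y}`, admit at least `δ n²` ordered pairs `(w,z)` such
that `x, y, u, v, w, z` are six distinct vertices and all eight triples of the double pyramid
with apexes `x, y` over the 4-cycle `u, v, w, z` are edges of `H`. -/
theorem statement9 (ε : ℝ) (hε0 : 0 < ε) (hε1 : ε < 1) :
    ∃ δ : ℝ, 0 < δ ∧ ∃ n₀ : ℕ, ∀ n : ℕ, n₀ ≤ n →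
      ∀ (V : Type) [Fintype V] [DecidableEq V], Fintype.card V = n →
        ∀ E : Finset (Finset V), (∀ e ∈ E, e.card = 3) →
          (((E ×ˢ E).filter fun p =>
              (p.1 ∩ p.2).card = 2 ∧
              ¬ ∃ u v x y : V, p.1 = {u, v, x} ∧ p.2 = {u, v, y} ∧
                δ * n ^ 2 ≤
                  (((Finset.univ ×ˢ Finset.univ : Finset (V × V)).filter fun wz =>
                    ([x, y, u, v, wz.1, wz.2] : List V).Pairwise (· ≠ ·) ∧
                    ({u, v, x} : Finset V) ∈ E ∧ ({u, v, y} : Finset V) ∈ E ∧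
                    ({v, wz.1, x} : Finset V) ∈ E ∧ ({v, wz.1, y} : Finset V) ∈ E ∧
                    ({wz.1, wz.2, x} : Finset V) ∈ E ∧ ({wz.1, wz.2, y} : Finset V) ∈ E ∧
                    ({wz.2, u, x} : Finset V) ∈ E ∧
                    ({wz.2, u, y} : Finset V) ∈ E).card : ℝ)).card : ℝ)
            ≤ ε * n ^ 4 :=
  statement9_general ε hε0
end
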